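/- arXiv:2405.12148 — 2 statements merged into one kernel-verified Lean document; each statement's English description precedes it below -/
import Mathlib

section
/- Let d ≥ 1, let Ω ⊂ ℝ^d be a bounded C² domain with outward unit normal ν, let β > 0, and let v : Ω → ℝ^d be a bounded measurable vector field. Let (λ, φ) be a Robin eigenpair for (Ω, v, β) and let (μ, ψ) be a Dirichlet eigenpair for (Ω, v). Then λ < μ. -/
open MeasureTheory Metric Filter
open scoped RealInnerProductSpace Topology

noncomputable section

abbrev Euc (d : ℕ) := EuclideanSpace ℝ (Fin d)

variable {d : ℕ}

/-- The Laplacian of `f : Euc d → ℝ`, as the sum of the second derivatives in the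
coordinate directions. -/
def lap (f : Euc d → ℝ) (x : Euc d) : ℝ :=
  ∑ i : Fin d,
    fderiv ℝ (fun y => fderiv ℝ f y (EuclideanSpace.single i 1)) x (EuclideanSpace.single i 1)

/-- `Ω ⊂ ℝ^d` is a bounded `C²` domain with outward unit normal `ν`. -/
def IsBoundedC2Domain (Ω : Set (Euc d)) (ν : Euc d → Euc d) : Prop :=
  Ω.Nonempty ∧ IsOpen Ω ∧ Bornology.IsBounded Ω ∧ IsConnected Ω ∧
    ∀ x ∈ frontier Ω, ∃ r : ℝ, 0 < r ∧ ∃ Φ : Euc d → ℝ, ContDiff ℝ 2 Φ ∧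
      (∀ y ∈ ball x r, gradient Φ y ≠ 0) ∧
      (Ω ∩ ball x r = {y | y ∈ ball x r ∧ Φ y < 0}) ∧
      (frontier Ω ∩ ball x r = {y | y ∈ ball x r ∧ Φ y = 0}) ∧
      (∀ y ∈ frontier Ω ∩ ball x r, ν y = ‖gradient Φ y‖⁻¹ • gradient Φ y)

/-- `G` is a continuous extension to the closure of `Ω` of the gradient of `φ`. -/
def GradExt (Ω : Set (Euc d)) (φ : Euc d → ℝ) (G : Euc d → Euc d) : Prop :=
  ContinuousOn G (closure Ω) ∧ ∀ x ∈ Ω, G x = gradient φ x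

/-- `(lam, φ)` is a Robin eigenpair for `(Ω, v, β)`, where `ν` is the outward unit
normal of `Ω`. -/
def IsRobinEigenpair (Ω : Set (Euc d)) (ν v : Euc d → Euc d) (β lam : ℝ)
    (φ : Euc d → ℝ) : Prop :=
  ContinuousOn φ (closure Ω) ∧ ContDiffOn ℝ 2 φ Ω ∧
    (∀ x ∈ Ω, 0 < φ x) ∧
    (∀ x ∈ Ω, -lap φ x + ⟪v x, gradient φ x⟫ = lam * φ x) ∧
    ∃ G : Euc d → Euc d, GradExt Ω φ G ∧
      ∀ x ∈ frontier Ω, ⟪G x, ν x⟫ + β * φ x = 0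

/-- `(μ, ψ)` is a Dirichlet eigenpair for `(Ω, v)`. -/
def IsDirichletEigenpair (Ω : Set (Euc d)) (v : Euc d → Euc d) (μ : ℝ)
    (ψ : Euc d → ℝ) : Prop :=
  ContinuousOn ψ (closure Ω) ∧ ContDiffOn ℝ 2 ψ Ω ∧
    (∀ x ∈ Ω, 0 < ψ x) ∧ (∀ x ∈ frontier Ω, ψ x = 0) ∧
    (∀ x ∈ Ω, -lap ψ x + ⟪v x, gradient ψ x⟫ = μ * ψ x)

/-- The radial unit vector field `e_r(x) = x / |x|` (with `e_r(0) = 0`). -/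
def er (x : Euc d) : Euc d := ‖x‖⁻¹ • x

/-- The supremum of `φ` over the closure of `Ω` equals `1`. -/
def SupOne (Ω : Set (Euc d)) (φ : Euc d → ℝ) : Prop :=
  sSup (φ '' closure Ω) = 1

/-- The maximum of `φ` over the closure of `Ω` equals `1`. -/
def MaxOne (Ω : Set (Euc d)) (φ : Euc d → ℝ) : Prop :=
  (∀ x ∈ closure Ω, φ x ≤ 1) ∧ ∃ x ∈ closure Ω, φ x = 1

/-
Suppose `μ ≤ lam`. At a boundary zero of `φ` the Robin condition would force `∂_ν φ = 0`, which
the Hopf lemma forbids; so `φ > 0` on `closure Ω`, and the least `M` with `ψ ≤ M φ` is attained at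
an interior point. Then `z = M φ - ψ ≥ 0` satisfies `-Δz + v·∇z + |lam| z ≥ 0` and vanishes
inside `Ω`, so by the strong minimum principle (again the Hopf lemma) `z ≡ 0`, which is absurd on
`∂Ω`, where `ψ = 0 < M φ`. The Hopf lemma itself comes from comparing with the barrier
`exp (-α |x - y|²) - exp (-α R²)` on an annulus.
-/

open Set Laplacian

theorem IsLocalMin.deriv_deriv_nonneg {f : ℝ → ℝ} {a : ℝ} (h : IsLocalMin f a)
    (hc : ContinuousAt f a) : 0 ≤ deriv (deriv f) a := by
  by_contra! hneg
  have hconst : f =ᶠ[𝓝 a] fun _ => f a := by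
    filter_upwards [h, isLocalMax_of_deriv_deriv_neg hneg h.deriv_eq_zero hc] with x h₁ h₂
    exact le_antisymm h₂ h₁
  exact hneg.ne (by rw [hconst.deriv.deriv_eq]; simp)

theorem IsLocalMinOn.hasDerivWithinAt_Ici_nonneg {f : ℝ → ℝ} {a f' : ℝ}
    (h : IsLocalMinOn f (Ici a) a) (hf : HasDerivWithinAt f f' (Ici a) a) : 0 ≤ f' := by
  simpa using h.hasFDerivWithinAt_nonneg hf.hasFDerivWithinAt
    (mem_posTangentConeAt_of_segment_subset ((convex_Ici a).segment_subset (mem_Ici.2 le_rfl)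
      (show a + 1 ∈ Ici a by simp)))

theorem ContinuousOn.nonneg_of_mem_closure {α : Type*} [TopologicalSpace α] {s : Set α}
    {f : α → ℝ} (hf : ContinuousOn f (closure s)) (h : ∀ x ∈ s, 0 ≤ f x) :
    ∀ x ∈ closure s, 0 ≤ f x := fun _ hx =>
  isClosed_Ici.closure_subset
    (MapsTo.closure_of_continuousOn (t := Ici 0) (fun y hy => h y hy) hf hx)

section NormedSpace

variable {E : Type*} [NormedAddCommGroup E] [NormedSpace ℝ E]

theorem hasDerivAt_comp_add_smul {f : E → ℝ} {p e : E} {s : ℝ}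
    (hf : DifferentiableAt ℝ f (p + s • e)) :
    HasDerivAt (fun t : ℝ => f (p + t • e)) (fderiv ℝ f (p + s • e) e) s := by
  have := hf.hasFDerivAt.comp_hasDerivAt s (((hasDerivAt_id s).smul_const e).const_add p)
  simp only [one_smul] at this
  exact this

theorem hasDerivAt_comp_sub_smul {f : E → ℝ} {x n : E} {s : ℝ}
    (hf : DifferentiableAt ℝ f (x - s • n)) :
    HasDerivAt (fun t : ℝ => f (x - t • n)) (-fderiv ℝ f (x - s • n) n) s := by
  have := hf.hasFDerivAt.comp_hasDerivAt s (((hasDerivAt_id s).smul_const n).const_sub x)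
  simp only [one_smul, map_neg] at this
  exact this

theorem IsLocalMin.fderiv_fderiv_apply_nonneg {F : E → ℝ} {p : E}
    (h : IsLocalMin F p) (hF : ContDiffAt ℝ 2 F p) (e : E) :
    0 ≤ fderiv ℝ (fun z => fderiv ℝ F z e) p e := by
  have hline : Continuous fun s : ℝ => p + s • e := by fun_prop
  have hmin : IsLocalMin (fun s : ℝ => F (p + s • e)) 0 :=
    (by simpa using h : IsLocalMin F (p + (0 : ℝ) • e)).comp_continuous
      (g := fun s : ℝ => p + s • e) hline.continuousAt
  have hderiv : deriv (fun s : ℝ => F (p + s • e)) =ᶠ[𝓝 0] fun s => fderiv ℝ F (p + s • e) e := by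
    have : ∀ᶠ s in 𝓝 (0 : ℝ), ContDiffAt ℝ 2 F (p + s • e) :=
      hline.continuousAt.eventually (by simpa using hF.eventually (by simp))
    filter_upwards [this] with s hs
    exact (hasDerivAt_comp_add_smul (hs.differentiableAt (by norm_num))).deriv
  have hdiff : DifferentiableAt ℝ (fun z => fderiv ℝ F z e) (p + (0 : ℝ) • e) := by
    simpa using ((hF.fderiv_right (m := 1) (by norm_num)).differentiableAt (by norm_num)).clm_apply
      (differentiableAt_const e)
  have := hmin.deriv_deriv_nonneg
    (ContinuousAt.comp (x := 0) (by simpa using hF.continuousAt) hline.continuousAt)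
  rwa [hderiv.deriv_eq, (hasDerivAt_comp_add_smul hdiff).deriv, zero_smul, add_zero] at this

end NormedSpace

section InteriorBall

variable {E : Type*} [NormedAddCommGroup E] [InnerProductSpace ℝ E] [CompleteSpace E]

theorem eventually_neg_on_ball_of_gradient_ne_zero {Φ : E → ℝ} {x : E}
    (hΦ : ContDiffAt ℝ 2 Φ x) (hx : Φ x = 0) (hg : gradient Φ x ≠ 0) :
    ∀ᶠ R in 𝓝[>] 0, ∀ z ∈ ball (x - R • (‖gradient Φ x‖⁻¹ • gradient Φ x)) R, Φ z < 0 := by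
  set g := gradient Φ x
  set n := ‖g‖⁻¹ • g
  have hgpos : 0 < ‖g‖ := norm_pos_iff.2 hg
  have hn : ‖n‖ = 1 := by simp [n, norm_smul, hgpos.ne']
  obtain ⟨K, t, ht, hlip⟩ := (hΦ.fderiv_right (m := 1) (by norm_num)).exists_lipschitzOnWith
  obtain ⟨ρ, hρ, hρt⟩ := Metric.mem_nhds_iff.1 (inter_mem ht (hΦ.eventually (by simp)))
  have hbound : 0 < min (ρ / 2) (‖g‖ / (2 * (K + 1))) := by positivity
  filter_upwards [Ioo_mem_nhdsGT hbound] with R ⟨hR, hRmin⟩ z hz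
  set w := z - x
  have hzR : ‖w + R • n‖ < R := by
    simpa [dist_eq_norm, w, sub_sub_eq_add_sub, add_sub_right_comm] using hz
  have hkey : ‖w‖ ^ 2 + 2 * R * ⟪w, n⟫ < 0 := by
    have := sq_lt_sq' (by linarith [norm_nonneg (w + R • n)]) hzR
    rw [norm_add_sq_real, norm_smul, hn, real_inner_smul_right, Real.norm_of_nonneg hR.le] at this
    nlinarith
  have hw : ‖w‖ < ρ := by
    have := norm_sub_le (w + R • n) (R • n)
    simp only [add_sub_cancel_right, norm_smul, hn, Real.norm_of_nonneg hR.le, mul_one] at this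
    linarith [min_le_left (ρ / 2) (‖g‖ / (2 * (K + 1)))]
  have hsub : closedBall x ‖w‖ ⊆ ball x ρ := closedBall_subset_ball hw
  have htaylor : ‖Φ z - Φ x - fderiv ℝ Φ x w‖ ≤ K * ‖w‖ * ‖w‖ := by
    have := (convex_closedBall x ‖w‖).norm_image_sub_le_of_norm_fderiv_le'
      (fun p hp => (hρt (hsub hp)).2.out.differentiableAt (by norm_num))
      (fun p hp => (hlip.norm_sub_le (hρt (hsub hp)).1 (hρt (mem_ball_self hρ)).1).trans
        (mul_le_mul_of_nonneg_left (by simpa [dist_eq_norm] using hp) K.2))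
      (mem_closedBall_self (norm_nonneg w)) (by simp [w, dist_eq_norm] : z ∈ closedBall x ‖w‖)
    simpa [w] using this
  have hfg : fderiv ℝ Φ x w = ‖g‖ * ⟪w, n⟫ := by
    rw [← inner_gradient_left, real_inner_comm, real_inner_smul_right, real_inner_comm]
    field_simp
  have hRK : 2 * R * K ≤ ‖g‖ := by
    have := (lt_min_iff.1 hRmin).2
    rw [lt_div_iff₀ (by positivity)] at this
    nlinarith [K.2]
  rw [hx, sub_zero, hfg] at htaylor
  nlinarith [(abs_le.1 (Real.norm_eq_abs _ ▸ htaylor)).2, mul_lt_mul_of_pos_left hkey hgpos,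
    mul_le_mul_of_nonneg_right hRK (sq_nonneg ‖w‖)]

end InteriorBall

theorem lap_eq_laplacian {f : Euc d → ℝ} {x : Euc d} (hf : ContDiffAt ℝ 2 f x) :
    lap f x = Δ f x := by
  have hdiff : DifferentiableAt ℝ (fderiv ℝ f) x :=
    (hf.fderiv_right (m := 1) (by norm_num)).differentiableAt (by norm_num)
  rw [InnerProductSpace.laplacian_eq_iteratedFDeriv_orthonormalBasis f
    (EuclideanSpace.basisFun (Fin d) ℝ)]
  simp [lap, iteratedFDeriv_two_apply, fderiv_clm_apply hdiff (differentiableAt_const _)]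

theorem lap_sub {u w : Euc d → ℝ} {x : Euc d} (hu : ContDiffAt ℝ 2 u x)
    (hw : ContDiffAt ℝ 2 w x) : lap (u - w) x = lap u x - lap w x := by
  rw [lap_eq_laplacian (f := u - w) (hu.sub hw), lap_eq_laplacian hu, lap_eq_laplacian hw,
    hu.laplacian_sub hw]

theorem lap_smul {u : Euc d → ℝ} {x : Euc d} (a : ℝ) (hu : ContDiffAt ℝ 2 u x) :
    lap (a • u) x = a * lap u x := by
  rw [lap_eq_laplacian (f := a • u) (hu.const_smul a), lap_eq_laplacian hu,
    InnerProductSpace.laplacian_smul a hu, smul_eq_mul]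

def driftOp (v : Euc d → Euc d) (c : ℝ) (u : Euc d → ℝ) (x : Euc d) : ℝ :=
  -lap u x + fderiv ℝ u x (v x) + c * u x

section driftOp

variable {v : Euc d → Euc d} {c : ℝ} {u w : Euc d → ℝ} {x : Euc d}

theorem driftOp_sub (hu : ContDiffAt ℝ 2 u x) (hw : ContDiffAt ℝ 2 w x) :
    driftOp v c (u - w) x = driftOp v c u x - driftOp v c w x := by
  simp only [driftOp, lap_sub hu hw, fderiv_sub (hu.differentiableAt (by norm_num))
    (hw.differentiableAt (by norm_num)), sub_apply, Pi.sub_apply]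
  ring

theorem driftOp_smul (a : ℝ) (hu : ContDiffAt ℝ 2 u x) :
    driftOp v c (a • u) x = a * driftOp v c u x := by
  simp only [driftOp, lap_smul a hu, fderiv_const_smul (hu.differentiableAt (by norm_num)),
    smul_apply, smul_eq_mul, Pi.smul_apply]
  ring

theorem driftOp_nonpos_of_isLocalMin (hmin : IsLocalMin u x) (hu : ContDiffAt ℝ 2 u x)
    (hux : u x ≤ 0) (hc : 0 ≤ c) : driftOp v c u x ≤ 0 := by
  have hlap : 0 ≤ lap u x :=
    Finset.sum_nonneg fun i _ => hmin.fderiv_fderiv_apply_nonneg hu _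
  simp only [driftOp, hmin.fderiv_eq_zero, zero_apply]
  nlinarith

theorem nonneg_on_of_driftOp_pos {K U : Set (Euc d)} (hK : IsCompact K) (hU : IsOpen U)
    (hUK : U ⊆ K) (hc : 0 ≤ c) (hcont : ContinuousOn u K) (hreg : ∀ p ∈ U, ContDiffAt ℝ 2 u p)
    (hpos : ∀ p ∈ U, 0 < driftOp v c u p) (hbdry : ∀ p ∈ K \ U, 0 ≤ u p) :
    ∀ p ∈ K, 0 ≤ u p := by
  by_contra! ⟨q, hqK, hq⟩
  obtain ⟨p, hpK, hpmin⟩ := hK.exists_isMinOn ⟨q, hqK⟩ hcont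
  have hp : u p < 0 := (hpmin hqK).trans_lt hq
  have hpU : p ∈ U := by
    by_contra hpU
    linarith [hbdry p ⟨hpK, hpU⟩]
  have := driftOp_nonpos_of_isLocalMin (v := v) ((hpmin.on_subset hUK).isLocalMin (hU.mem_nhds hpU))
    (hreg p hpU) hp.le hc
  linarith [hpos p hpU]

end driftOp

def hopfBarrier (α R : ℝ) (y x : Euc d) : ℝ :=
  Real.exp (-α * ‖x - y‖ ^ 2) - Real.exp (-α * R ^ 2)

section hopfBarrier

variable {α R : ℝ} {y x : Euc d}

theorem hasFDerivAt_exp_neg_mul_norm_sub_sq :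
    HasFDerivAt (fun z : Euc d => Real.exp (-α * ‖z - y‖ ^ 2))
      ((-2 * α * Real.exp (-α * ‖x - y‖ ^ 2)) • innerSL ℝ (x - y)) x := by
  refine (((hasFDerivAt_sub_const (x := x) y).norm_sq.const_mul (-α)).exp).congr_fderiv ?_
  ext w
  simp only [map_sub, ContinuousLinearMap.comp_id, smul_apply, sub_apply, coe_innerSL_apply,
    nsmul_eq_mul, smul_eq_mul]
  ring

theorem hasFDerivAt_hopfBarrier :
    HasFDerivAt (hopfBarrier α R y)
      ((-2 * α * Real.exp (-α * ‖x - y‖ ^ 2)) • innerSL ℝ (x - y)) x :=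
  hasFDerivAt_exp_neg_mul_norm_sub_sq.sub_const _

theorem fderiv_hopfBarrier_apply (w : Euc d) :
    fderiv ℝ (hopfBarrier α R y) x w = -2 * α * Real.exp (-α * ‖x - y‖ ^ 2) * ⟪x - y, w⟫ := by
  simp [hasFDerivAt_hopfBarrier.fderiv, inner_sub_left]

theorem contDiff_hopfBarrier : ContDiff ℝ 2 (hopfBarrier α R y) :=
  ((contDiff_const.mul ((contDiff_norm_sq ℝ).comp (contDiff_id.sub contDiff_const))).exp).sub
    contDiff_const

theorem fderiv_fderiv_hopfBarrier_apply (e : Euc d) :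
    fderiv ℝ (fun z => fderiv ℝ (hopfBarrier α R y) z e) x e =
      Real.exp (-α * ‖x - y‖ ^ 2) * (4 * α ^ 2 * ⟪x - y, e⟫ ^ 2 - 2 * α * ‖e‖ ^ 2) := by
  have hinner : HasFDerivAt (fun z : Euc d => ⟪z - y, e⟫) (innerSL ℝ e) x := by
    have := ((innerSL ℝ e).hasFDerivAt).comp x (hasFDerivAt_sub_const (x := x) y)
    simp only [Function.comp_def, innerSL_apply_apply, ContinuousLinearMap.comp_id] at this
    simpa only [real_inner_comm e] using this
  simp_rw [fderiv_hopfBarrier_apply]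
  rw [((hasFDerivAt_exp_neg_mul_norm_sub_sq.const_mul (-2 * α)).fun_mul hinner).fderiv]
  simp only [inner_sub_left, add_apply, smul_apply, coe_innerSL_apply, real_inner_self_eq_norm_sq,
    smul_eq_mul]
  ring

theorem lap_hopfBarrier :
    lap (hopfBarrier α R y) x =
      Real.exp (-α * ‖x - y‖ ^ 2) * (4 * α ^ 2 * ‖x - y‖ ^ 2 - 2 * α * d) := by
  have hsum : ∑ i : Fin d, ⟪x - y, EuclideanSpace.single i (1 : ℝ)⟫ ^ 2 = ‖x - y‖ ^ 2 := by
    simp [EuclideanSpace.inner_single_right, EuclideanSpace.real_norm_sq_eq]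
  simp only [lap, fderiv_fderiv_hopfBarrier_apply, ← Finset.mul_sum, Finset.sum_sub_distrib, hsum,
    PiLp.norm_single, norm_one, one_pow, mul_one, Finset.sum_const, Finset.card_univ,
    Fintype.card_fin, nsmul_eq_mul]
  ring

end hopfBarrier

theorem exists_driftOp_hopfBarrier_neg (v : Euc d → Euc d) {c C R : ℝ} (hc : 0 ≤ c) (hR : 0 < R)
    (y : Euc d) : ∃ α > 0, ∀ x, R / 2 ≤ ‖x - y‖ → ‖x - y‖ ≤ R → ‖v x‖ ≤ C →
      driftOp v c (hopfBarrier α R y) x < 0 := by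
  set α := (2 * d + 2 * |C| * R + c) / R ^ 2 + 1
  have hα : α * R ^ 2 = 2 * d + 2 * |C| * R + c + R ^ 2 := by
    simp only [α]; field_simp
  have hα₁ : 1 ≤ α := le_add_of_nonneg_left (by positivity)
  refine ⟨α, by linarith, fun x h₁ h₂ hv => ?_⟩
  set E := Real.exp (-α * ‖x - y‖ ^ 2)
  have hE : 0 < E := Real.exp_pos _
  have hdrift : -⟪x - y, v x⟫ ≤ R * |C| :=
    (neg_le_abs _).trans <| (abs_real_inner_le_norm _ _).trans <|
      mul_le_mul h₂ (hv.trans (le_abs_self C)) (norm_nonneg _) hR.le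
  have hgap : 2 * α * d + 2 * α * R * |C| + c < α ^ 2 * R ^ 2 := by
    have : α ^ 2 * R ^ 2 = α * (2 * d + 2 * |C| * R + c + R ^ 2) := by rw [← hα]; ring
    nlinarith [mul_pos (by linarith : (0:ℝ) < α) (pow_pos hR 2)]
  have hr : R ^ 2 ≤ 4 * ‖x - y‖ ^ 2 := by nlinarith
  have hK : 0 < Real.exp (-α * R ^ 2) := Real.exp_pos _
  rw [driftOp, lap_hopfBarrier, fderiv_hopfBarrier_apply, hopfBarrier]
  nlinarith [mul_le_mul_of_nonneg_left hdrift (by positivity : 0 ≤ 2 * α * E),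
    mul_le_mul_of_nonneg_left hr (by positivity : 0 ≤ α ^ 2 * E), mul_pos hE (sub_pos.2 hgap),
    mul_nonneg hc hK.le]

theorem hopfBarrier_le_one {α R : ℝ} (hα : 0 ≤ α) (y x : Euc d) : hopfBarrier α R y x ≤ 1 := by
  have : Real.exp (-α * ‖x - y‖ ^ 2) ≤ 1 :=
    Real.exp_le_one_iff.2 (by nlinarith [norm_nonneg (x - y)])
  rw [hopfBarrier]
  linarith [Real.exp_pos (-α * R ^ 2)]

theorem hopfBarrier_eq_zero_of_norm_eq {α R : ℝ} {y x : Euc d} (hx : ‖x - y‖ = R) :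
    hopfBarrier α R y x = 0 := by
  simp [hopfBarrier, hx]

theorem exists_mul_hopfBarrier_le {v : Euc d → Euc d} {c C R : ℝ} {u : Euc d → ℝ} {y : Euc d}
    (hR : 0 < R) (hc : 0 ≤ c) (hv : ∀ z ∈ ball y R, ‖v z‖ ≤ C)
    (hreg : ∀ z ∈ ball y R, ContDiffAt ℝ 2 u z) (hsuper : ∀ z ∈ ball y R, 0 ≤ driftOp v c u z)
    (hcont : ContinuousOn u (closedBall y R)) (hpos : ∀ z ∈ ball y R, 0 < u z)
    (hnonneg : ∀ z ∈ closedBall y R, 0 ≤ u z) :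
    ∃ α > 0, ∃ m > 0, ∀ z ∈ closedBall y R \ ball y (R / 2), m * hopfBarrier α R y z ≤ u z := by
  obtain ⟨α, hα, hbarrier⟩ := exists_driftOp_hopfBarrier_neg v hc hR y (C := C)
  have hinner : closedBall y (R / 2) ⊆ ball y R := closedBall_subset_ball (by linarith)
  obtain ⟨q, hq, hqmin⟩ := (isCompact_closedBall y (R / 2)).exists_isMinOn
    (nonempty_closedBall.2 (by positivity)) (hcont.mono (hinner.trans ball_subset_closedBall))
  refine ⟨α, hα, u q, hpos q (hinner hq), fun z hz => sub_nonneg.1 ?_⟩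
  refine nonneg_on_of_driftOp_pos (v := v) (u := u - u q • hopfBarrier α R y)
    (U := ball y R \ closedBall y (R / 2))
    ((isCompact_closedBall y R).diff isOpen_ball) (isOpen_ball.sdiff isClosed_closedBall)
    (sdiff_subset_sdiff ball_subset_closedBall ball_subset_closedBall) hc ?_ ?_ ?_ ?_ z hz
  · exact (hcont.mono sdiff_subset).sub
      (continuous_const.mul contDiff_hopfBarrier.continuous).continuousOn
  · intro p hp
    exact (hreg p hp.1).sub (contDiffAt_const.mul contDiff_hopfBarrier.contDiffAt)
  · intro p hp
    have hp₁ : R / 2 ≤ ‖p - y‖ := by simpa [dist_eq_norm] using (not_le.1 hp.2).le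
    have hp₂ : ‖p - y‖ ≤ R := by simpa [dist_eq_norm] using (mem_ball.1 hp.1).le
    have := driftOp_sub (v := v) (c := c) (w := u q • hopfBarrier α R y) (hreg p hp.1)
      ((contDiff_hopfBarrier (α := α) (R := R) (y := y)).contDiffAt.const_smul (u q))
    rw [this, driftOp_smul _ contDiff_hopfBarrier.contDiffAt]
    nlinarith [hsuper p hp.1, hbarrier p hp₁ hp₂ (hv p hp.1), hpos q (hinner hq)]
  · rintro p ⟨⟨hpR, -⟩, hpU⟩
    simp only [Pi.sub_apply, Pi.smul_apply, smul_eq_mul, sub_nonneg]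
    by_cases hp : p ∈ closedBall y (R / 2)
    · nlinarith [isMinOn_iff.1 hqmin p hp, hopfBarrier_le_one hα.le y p (R := R),
        hpos q (hinner hq)]
    · have hpR' : ‖p - y‖ = R := le_antisymm (by simpa [dist_eq_norm] using hpR)
        (by simpa [dist_eq_norm] using fun h => hpU ⟨h, hp⟩)
      simpa [hopfBarrier_eq_zero_of_norm_eq hpR'] using hnonneg p hpR

theorem hopf_lemma {v : Euc d → Euc d} {c C R D : ℝ} {u : Euc d → ℝ} {x n : Euc d}
    (hR : 0 < R) (hn : ‖n‖ = 1) (hc : 0 ≤ c) (hv : ∀ z ∈ ball (x - R • n) R, ‖v z‖ ≤ C)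
    (hreg : ∀ z ∈ ball (x - R • n) R, ContDiffAt ℝ 2 u z)
    (hsuper : ∀ z ∈ ball (x - R • n) R, 0 ≤ driftOp v c u z)
    (hcont : ContinuousOn u (closedBall (x - R • n) R)) (hpos : ∀ z ∈ ball (x - R • n) R, 0 < u z)
    (hnonneg : ∀ z ∈ closedBall (x - R • n) R, 0 ≤ u z) (hx : u x = 0)
    (hD : HasDerivWithinAt (fun s : ℝ => u (x - s • n)) D (Ici 0) 0) : 0 < D := by
  obtain ⟨α, hα, m, hm, hle⟩ := exists_mul_hopfBarrier_le hR hc hv hreg hsuper hcont hpos hnonneg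
  set y := x - R • n
  have hdist : ∀ s ≤ R, ‖x - s • n - y‖ = R - s := fun s hs => by
    rw [show x - s • n - y = (R - s) • n by simp only [y, sub_smul]; abel, norm_smul, hn,
      Real.norm_of_nonneg (sub_nonneg.2 hs), mul_one]
  have hmin : IsLocalMinOn (fun s : ℝ => u (x - s • n) - m * hopfBarrier α R y (x - s • n))
      (Ici 0) 0 := by
    filter_upwards [Ico_mem_nhdsGE (show (0 : ℝ) < R / 2 by positivity)] with s hs
    have hmem : x - s • n ∈ closedBall y R \ ball y (R / 2) := by
      simp only [Set.mem_sdiff, mem_closedBall, mem_ball, dist_eq_norm,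
        hdist s (by linarith [hs.2]), not_lt]
      constructor <;> linarith [hs.1, hs.2]
    have h0 : hopfBarrier α R y x = 0 :=
      hopfBarrier_eq_zero_of_norm_eq (by simpa using hdist 0 hR.le)
    simpa [hx, h0] using hle _ hmem
  have hbarrier : HasDerivAt (fun s : ℝ => hopfBarrier α R y (x - s • n))
      (2 * α * R * Real.exp (-α * R ^ 2)) 0 := by
    convert hasDerivAt_comp_sub_smul (s := 0) (n := n)
      ((contDiff_hopfBarrier (α := α) (R := R) (y := y)).differentiable (by norm_num) _) using 1
    simp only [zero_smul, sub_zero, fderiv_hopfBarrier_apply, y, sub_sub_cancel, norm_smul, hn,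
      Real.norm_of_nonneg hR.le, mul_one, real_inner_smul_left, real_inner_self_eq_norm_sq]
    ring
  have := hmin.hasDerivWithinAt_Ici_nonneg (hD.sub (hbarrier.const_mul m).hasDerivWithinAt)
  nlinarith [mul_pos (mul_pos (mul_pos hm hα) hR) (Real.exp_pos (-α * R ^ 2))]

namespace IsBoundedC2Domain

variable {Ω : Set (Euc d)} {ν : Euc d → Euc d} {x : Euc d}

theorem frontier_nonempty [NeZero d] (hΩ : IsBoundedC2Domain Ω ν) : (frontier Ω).Nonempty :=
  nonempty_frontier_iff.2 ⟨hΩ.1, fun h => NormedSpace.unbounded_univ ℝ (Euc d) (h ▸ hΩ.2.2.1)⟩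

theorem norm_normal (hΩ : IsBoundedC2Domain Ω ν) (hx : x ∈ frontier Ω) : ‖ν x‖ = 1 := by
  obtain ⟨r, hr, Φ, -, hgrad, -, -, hν⟩ := hΩ.2.2.2.2 x hx
  rw [hν x ⟨hx, mem_ball_self hr⟩, norm_smul, norm_inv, norm_norm,
    inv_mul_cancel₀ (norm_ne_zero_iff.2 (hgrad x (mem_ball_self hr)))]

theorem exists_ball_subset (hΩ : IsBoundedC2Domain Ω ν) (hx : x ∈ frontier Ω) :
    ∃ R > 0, ball (x - R • ν x) R ⊆ Ω := by
  obtain ⟨r, hr, Φ, hΦ, hgrad, hΩeq, hfront, hν⟩ := hΩ.2.2.2.2 x hx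
  have hΦx : Φ x = 0 := by
    have : x ∈ frontier Ω ∩ ball x r := ⟨hx, mem_ball_self hr⟩
    rw [hfront] at this
    exact this.2
  obtain ⟨R, hneg, hR, hRr⟩ := ((eventually_neg_on_ball_of_gradient_ne_zero hΦ.contDiffAt hΦx
    (hgrad x (mem_ball_self hr))).and (Ioo_mem_nhdsGT (half_pos hr))).exists
  refine ⟨R, hR, fun z hz => ?_⟩
  rw [hν x ⟨hx, mem_ball_self hr⟩] at hz
  have hzr : z ∈ ball x r := by
    have := dist_triangle z (x - R • (‖gradient Φ x‖⁻¹ • gradient Φ x)) x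
    rw [mem_ball] at hz ⊢
    simp only [dist_eq_norm, sub_sub_cancel_left, norm_neg, norm_smul, norm_inv, norm_norm,
      inv_mul_cancel₀ (norm_ne_zero_iff.2 (hgrad x (mem_ball_self hr))), Real.norm_of_nonneg hR.le,
      mul_one] at this hz ⊢
    linarith
  have : z ∈ Ω ∩ ball x r := by
    rw [hΩeq]
    exact ⟨hzr, hneg z hz⟩
  exact this.1

end IsBoundedC2Domain

theorem driftOp_eq_mul_of_eigen {v : Euc d → Euc d} {u : Euc d → ℝ} {x : Euc d} {lam : ℝ}
    (h : -lap u x + ⟪v x, gradient u x⟫ = lam * u x) (c : ℝ) :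
    driftOp v c u x = (lam + c) * u x := by
  rw [inner_gradient_right] at h
  rw [driftOp, add_mul, ← h]
  rfl

theorem GradExt.hasDerivWithinAt_Ici {Ω : Set (Euc d)} {φ : Euc d → ℝ} {G : Euc d → Euc d}
    (hG : GradExt Ω φ G) (hφc : ContinuousOn φ (closure Ω))
    (hφd : ∀ z ∈ Ω, DifferentiableAt ℝ φ z) {x n : Euc d} {δ : ℝ} (hx : x ∈ closure Ω)
    (hδ : 0 < δ) (hseg : ∀ s ∈ Ioo 0 δ, x - s • n ∈ Ω) :
    HasDerivWithinAt (fun s : ℝ => φ (x - s • n)) (-⟪G x, n⟫) (Ici 0) 0 := by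
  have hline : Continuous fun s : ℝ => x - s • n := by fun_prop
  have hlim : Tendsto (fun s : ℝ => x - s • n) (𝓝[>] 0) (𝓝[closure Ω] x) :=
    tendsto_nhdsWithin_iff.2 ⟨(hline.tendsto' 0 x (by simp)).mono_left nhdsWithin_le_nhds,
      mem_of_superset (Ioo_mem_nhdsGT hδ) fun s hs => subset_closure (hseg s hs)⟩
  have hderiv : ∀ s ∈ Ioo 0 δ, HasDerivAt (fun t : ℝ => φ (x - t • n)) (-⟪G (x - s • n), n⟫) s :=
    fun s hs => by
      rw [hG.2 _ (hseg s hs), inner_gradient_left]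
      exact hasDerivAt_comp_sub_smul (hφd _ (hseg s hs))
  refine hasDerivWithinAt_Ici_of_tendsto_deriv
    (fun s hs => (hderiv s hs).differentiableAt.differentiableWithinAt)
    (by
      rw [ContinuousWithinAt, nhdsWithin_Ioo_eq_nhdsGT hδ, zero_smul, sub_zero]
      exact (hφc x hx).tendsto.comp hlim)
    (Ioo_mem_nhdsGT hδ) ?_
  refine Tendsto.congr' ?_ (((hG.1 x hx).tendsto.comp hlim).inner tendsto_const_nhds).neg
  filter_upwards [Ioo_mem_nhdsGT hδ] with s hs
  exact (hderiv s hs).deriv.symm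

theorem IsRobinEigenpair.pos_of_mem_closure {Ω : Set (Euc d)} {ν v : Euc d → Euc d}
    {β lam C : ℝ} {φ : Euc d → ℝ} (h : IsRobinEigenpair Ω ν v β lam φ)
    (hΩ : IsBoundedC2Domain Ω ν) (hv : ∀ x ∈ Ω, ‖v x‖ ≤ C) : ∀ x ∈ closure Ω, 0 < φ x := by
  obtain ⟨hφc, hφreg, hφpos, hφeq, G, hG, hbc⟩ := h
  have hreg : ∀ z ∈ Ω, ContDiffAt ℝ 2 φ z := fun z hz => hφreg.contDiffAt (hΩ.2.1.mem_nhds hz)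
  have hnonneg := hφc.nonneg_of_mem_closure fun z hz => (hφpos z hz).le
  intro x hx
  refine (hnonneg x hx).lt_of_ne' fun hx0 => ?_
  have hxfr : x ∈ frontier Ω := ⟨hx, fun hxΩ => (hφpos x (interior_subset hxΩ)).ne' hx0⟩
  obtain ⟨R, hR, hball⟩ := hΩ.exists_ball_subset hxfr
  have hclosed : closedBall (x - R • ν x) R ⊆ closure Ω := by
    rw [← closure_ball _ hR.ne']
    exact closure_mono hball
  have hseg : ∀ s ∈ Ioo (0 : ℝ) R, x - s • ν x ∈ Ω := fun s hs => hball <| by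
    rw [mem_ball, dist_eq_norm, show x - s • ν x - (x - R • ν x) = (R - s) • ν x by module,
      norm_smul, hΩ.norm_normal hxfr, mul_one, Real.norm_of_nonneg (by linarith [hs.2])]
    linarith [hs.1]
  have hsuper : ∀ z ∈ ball (x - R • ν x) R, 0 ≤ driftOp v |lam| φ z := fun z hz => by
    rw [driftOp_eq_mul_of_eigen (hφeq z (hball hz))]
    exact mul_nonneg (by linarith [neg_abs_le lam]) (hφpos z (hball hz)).le
  have hD := hopf_lemma hR (hΩ.norm_normal hxfr) (abs_nonneg lam) (fun z hz => hv z (hball hz))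
    (fun z hz => hreg z (hball hz)) hsuper (hφc.mono hclosed) (fun z hz => hφpos z (hball hz))
    (fun z hz => hnonneg z (hclosed hz)) hx0
    (hG.hasDerivWithinAt_Ici hφc (fun z hz => (hreg z hz).differentiableAt (by norm_num)) hx hR
      hseg)
  have hbcx := hbc x hxfr
  rw [hx0, mul_zero, add_zero] at hbcx
  linarith

section StrongMinimumPrinciple

variable {Ω : Set (Euc d)} {v : Euc d → Euc d} {c C : ℝ} {u : Euc d → ℝ}

theorem pos_on_sphere_of_driftOp_nonneg (hΩ : IsOpen Ω) (hc : 0 ≤ c) (hv : ∀ x ∈ Ω, ‖v x‖ ≤ C)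
    (hreg : ∀ x ∈ Ω, ContDiffAt ℝ 2 u x) (hsuper : ∀ x ∈ Ω, 0 ≤ driftOp v c u x)
    (hnonneg : ∀ x ∈ Ω, 0 ≤ u x) {q : Euc d} {s : ℝ} (hs : 0 < s) (hball : closedBall q s ⊆ Ω)
    (hpos : ∀ w ∈ ball q s, 0 < u w) : ∀ x ∈ sphere q s, 0 < u x := by
  intro x hx
  have hxΩ := hball (sphere_subset_closedBall hx)
  refine (hnonneg x hxΩ).lt_of_ne' fun hx0 => ?_
  set n := s⁻¹ • (x - q)
  have hn : ‖n‖ = 1 := by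
    rw [norm_smul, ← dist_eq_norm, mem_sphere.1 hx, norm_inv, Real.norm_of_nonneg hs.le,
      inv_mul_cancel₀ hs.ne']
  have hcenter : x - s • n = q := by simp [n, smul_smul, hs.ne']
  have hmin : IsLocalMin u x := by
    filter_upwards [hΩ.mem_nhds hxΩ] with w hw
    rw [hx0]
    exact hnonneg w hw
  have hD : HasDerivWithinAt (fun t : ℝ => u (x - t • n)) 0 (Ici 0) 0 := by
    have := hasDerivAt_comp_sub_smul (x := x) (n := n) (s := 0)
      (by simpa using (hreg x hxΩ).differentiableAt (by norm_num))
    simpa [hmin.fderiv_eq_zero] using this.hasDerivWithinAt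
  rw [← hcenter] at hball hpos
  exact lt_irrefl _ <| hopf_lemma hs hn hc (fun w hw => hv w (hball (ball_subset_closedBall hw)))
    (fun w hw => hreg w (hball (ball_subset_closedBall hw)))
    (fun w hw => hsuper w (hball (ball_subset_closedBall hw))) (fun w hw =>
      ((hreg w (hball hw)).continuousAt).continuousWithinAt) hpos (fun w hw => hnonneg w (hball hw))
    hx0 hD

theorem isOpen_setOf_eq_zero_of_driftOp_nonneg (hΩ : IsOpen Ω) (hc : 0 ≤ c)
    (hv : ∀ x ∈ Ω, ‖v x‖ ≤ C) (hreg : ∀ x ∈ Ω, ContDiffAt ℝ 2 u x)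
    (hsuper : ∀ x ∈ Ω, 0 ≤ driftOp v c u x) (hnonneg : ∀ x ∈ Ω, 0 ≤ u x) :
    IsOpen {x | x ∈ Ω ∧ u x = 0} := by
  set Z := {x | x ∈ Ω ∧ u x = 0}
  rw [Metric.isOpen_iff]
  rintro p hpZ
  obtain ⟨δ, hδ, hδΩ⟩ := Metric.isOpen_iff.1 hΩ p hpZ.1
  refine ⟨δ / 2, half_pos hδ, fun q hq => ⟨hδΩ (ball_subset_ball (by linarith) hq), ?_⟩⟩
  by_contra hq0
  obtain ⟨xb, hxbZ, hdist⟩ :=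
    isClosed_closure.exists_infDist_eq_dist ⟨p, subset_closure hpZ⟩ q
  have hle : dist q xb ≤ dist q p := hdist ▸ infDist_le_dist_of_mem (subset_closure hpZ)
  have hsub : closedBall q (dist q xb) ⊆ Ω := fun w hw => hδΩ <| by
    rw [mem_ball] at hq ⊢
    linarith [dist_triangle w q p, mem_closedBall.1 hw, dist_comm p q]
  have hxbΩ : xb ∈ Ω := hsub (by simp [dist_comm])
  have hxb0 : u xb = 0 := by
    have hzero : u '' Z ⊆ {0} := by
      rintro _ ⟨w, hw, rfl⟩
      exact hw.2
    simpa using closure_mono hzero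
      ((hreg xb hxbΩ).continuousAt.continuousWithinAt.mem_closure_image hxbZ)
  have hpos : ∀ w ∈ ball q (dist q xb), 0 < u w := fun w hw => by
    have hwΩ := hsub (ball_subset_closedBall hw)
    refine (hnonneg w hwΩ).lt_of_ne' fun hw0 => ?_
    have := infDist_le_dist_of_mem (x := q) (subset_closure (s := Z) ⟨hwΩ, hw0⟩)
    rw [mem_ball, dist_comm] at hw
    linarith
  have hs : 0 < dist q xb := dist_pos.2 fun h => hq0 (h ▸ hxb0)
  exact (pos_on_sphere_of_driftOp_nonneg hΩ hc hv hreg hsuper hnonneg hs hsub hpos xb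
    (mem_sphere.2 (dist_comm xb q))).ne' hxb0

theorem eq_zero_of_driftOp_nonneg (hΩ : IsOpen Ω) (hconn : IsPreconnected Ω) (hc : 0 ≤ c)
    (hv : ∀ x ∈ Ω, ‖v x‖ ≤ C) (hreg : ∀ x ∈ Ω, ContDiffAt ℝ 2 u x)
    (hsuper : ∀ x ∈ Ω, 0 ≤ driftOp v c u x) (hnonneg : ∀ x ∈ Ω, 0 ≤ u x) {x₀ : Euc d}
    (hx₀ : x₀ ∈ Ω) (hu₀ : u x₀ = 0) : ∀ x ∈ Ω, u x = 0 := by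
  have hpos : IsOpen {x | x ∈ Ω ∧ 0 < u x} :=
    ContinuousOn.isOpen_inter_preimage (fun x hx => (hreg x hx).continuousAt.continuousWithinAt)
      hΩ isOpen_Ioi
  have hsub := hconn.subset_left_of_subset_union
    (isOpen_setOf_eq_zero_of_driftOp_nonneg hΩ hc hv hreg hsuper hnonneg) hpos
    (Set.disjoint_left.2 fun x h₁ h₂ => h₂.2.ne' h₁.2)
    (fun x hx => (hnonneg x hx).eq_or_lt.imp (fun h => ⟨hx, h.symm⟩) fun h => ⟨hx, h⟩)
    ⟨x₀, hx₀, hx₀, hu₀⟩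
  exact fun x hx => (hsub hx).2

end StrongMinimumPrinciple

theorem exists_mul_le_with_contact {Ω : Set (Euc d)} (hb : Bornology.IsBounded Ω)
    (hne : Ω.Nonempty) {φ ψ : Euc d → ℝ} (hφ : ContinuousOn φ (closure Ω))
    (hψ : ContinuousOn ψ (closure Ω)) (hφpos : ∀ x ∈ closure Ω, 0 < φ x)
    (hψpos : ∀ x ∈ Ω, 0 < ψ x) (hψ0 : ∀ x ∈ frontier Ω, ψ x = 0) :
    ∃ M > 0, ∃ x₀ ∈ Ω, (∀ x ∈ closure Ω, ψ x ≤ M * φ x) ∧ ψ x₀ = M * φ x₀ := by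
  obtain ⟨x₀, hx₀, hmax⟩ := hb.isCompact_closure.exists_isMaxOn (hne.mono subset_closure)
    (hψ.div hφ fun x hx => (hφpos x hx).ne')
  obtain ⟨z, hz⟩ := hne
  have hM : 0 < ψ x₀ / φ x₀ :=
    (div_pos (hψpos z hz) (hφpos z (subset_closure hz))).trans_le (hmax (subset_closure hz))
  have hcontact : ψ x₀ = ψ x₀ / φ x₀ * φ x₀ := (div_mul_cancel₀ _ (hφpos x₀ hx₀).ne').symm
  refine ⟨ψ x₀ / φ x₀, hM, x₀, ?_, fun x hx => (div_le_iff₀ (hφpos x hx)).1 (hmax hx), hcontact⟩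
  by_contra hx₀Ω
  simp [hψ0 x₀ ⟨hx₀, fun h => hx₀Ω (interior_subset h)⟩] at hM

theorem robin_lt_dirichlet_general
    (d : ℕ) (hd : 1 ≤ d) (Ω : Set (Euc d)) (ν : Euc d → Euc d)
    (hΩ : IsBoundedC2Domain Ω ν) (β : ℝ)
    (v : Euc d → Euc d) (hbd : ∃ C : ℝ, ∀ x ∈ Ω, ‖v x‖ ≤ C)
    (lam : ℝ) (φ : Euc d → ℝ) (hrobin : IsRobinEigenpair Ω ν v β lam φ)
    (μ : ℝ) (ψ : Euc d → ℝ) (hdir : IsDirichletEigenpair Ω v μ ψ) :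
    lam < μ := by
  have : NeZero d := ⟨by omega⟩
  obtain ⟨C, hv⟩ := hbd
  have hφpos := hrobin.pos_of_mem_closure hΩ hv
  obtain ⟨hφc, hφreg, -, hφeq, -⟩ := hrobin
  obtain ⟨hψc, hψreg, hψpos, hψ0, hψeq⟩ := hdir
  obtain ⟨M, hM, x₀, hx₀, hle, hcontact⟩ :=
    exists_mul_le_with_contact hΩ.2.2.1 hΩ.1 hφc hψc hφpos hψpos hψ0
  by_contra! hμ
  have hreg : ∀ x ∈ Ω, ContDiffAt ℝ 2 (M • φ - ψ) x := fun x hx =>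
    ((hφreg.const_smul M).sub hψreg).contDiffAt (hΩ.2.1.mem_nhds hx)
  have hsuper : ∀ x ∈ Ω, 0 ≤ driftOp v |lam| (M • φ - ψ) x := fun x hx => by
    have hφx := hφreg.contDiffAt (hΩ.2.1.mem_nhds hx)
    rw [driftOp_sub (u := M • φ) (hφx.const_smul M) (hψreg.contDiffAt (hΩ.2.1.mem_nhds hx)),
      driftOp_smul M hφx, driftOp_eq_mul_of_eigen (hφeq x hx), driftOp_eq_mul_of_eigen (hψeq x hx)]
    nlinarith [hle x (subset_closure hx), hψpos x hx, neg_abs_le lam, abs_nonneg lam]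
  have hzero := eq_zero_of_driftOp_nonneg hΩ.2.1 hΩ.2.2.2.1.isPreconnected (abs_nonneg lam) hv
    hreg hsuper (fun x hx => by simpa using hle x (subset_closure hx)) hx₀ (by simp [hcontact])
  obtain ⟨xb, hxb⟩ := hΩ.frontier_nonempty
  have := (hψc.sub (hφc.const_smul M)).nonneg_of_mem_closure
    (fun x hx => sub_nonneg.2 (sub_eq_zero.1 (hzero x hx)).le) xb hxb.1
  simp only [Pi.sub_apply, Pi.smul_apply, smul_eq_mul, hψ0 xb hxb] at this
  nlinarith [hφpos xb hxb.1]

/-- The Robin principal eigenvalue is strictly below the Dirichlet principal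
eigenvalue (Lemma 2.2). -/
theorem robin_lt_dirichlet
    (d : ℕ) (hd : 1 ≤ d) (Ω : Set (Euc d)) (ν : Euc d → Euc d)
    (hΩ : IsBoundedC2Domain Ω ν) (β : ℝ) (hβ : 0 < β)
    (v : Euc d → Euc d) (hmeas : Measurable v) (hbd : ∃ C : ℝ, ∀ x ∈ Ω, ‖v x‖ ≤ C)
    (lam : ℝ) (φ : Euc d → ℝ) (hrobin : IsRobinEigenpair Ω ν v β lam φ)
    (μ : ℝ) (ψ : Euc d → ℝ) (hdir : IsDirichletEigenpair Ω v μ ψ) :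
    lam < μ :=
  robin_lt_dirichlet_general d hd Ω ν hΩ β v hbd lam φ hrobin μ ψ hdir
end
end

section
/- Let d ≥ 1, let Ω ⊂ ℝ^d be a nonempty open set, let v : Ω → ℝ^d be a bounded measurable vector field, let λ > 0, and let φ : Ω → ℝ be twice continuously differentiable with φ > 0 in Ω and -Δφ(x) + v(x)·∇φ(x) = λ φ(x) for every x ∈ Ω. Then the set {x ∈ Ω : ∇φ(x) = 0} has Lebesgue measure zero. -/
/-!
On the critical set `S = {x ∈ Ω | ∇φ x = 0}` the gradient map is constant, so at almost every
point of `S` (at every Lebesgue density point) its derivative, the Hessian of `φ`, vanishes.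
There `Δφ = 0` and `∇φ = 0`, so the equation forces `λ φ x = 0`, contradicting `λ φ > 0`.
-/

open MeasureTheory Metric Filter
open scoped RealInnerProductSpace Topology

noncomputable section

variable {d : ℕ}

theorem ContinuousOn.measurableSet_inter_preimage_of_isClosed {α β : Type*}
    [TopologicalSpace α] [MeasurableSpace α] [OpensMeasurableSpace α] [TopologicalSpace β]
    {f : α → β} {s : Set α} {t : Set β} (hf : ContinuousOn f s) (hs : IsOpen s)
    (ht : IsClosed t) : MeasurableSet (s ∩ f ⁻¹' t) := by
  have hdiff : s ∩ f ⁻¹' t = s \ (s ∩ f ⁻¹' tᶜ) := by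
    ext x
    simp only [Set.mem_inter_iff, Set.mem_sdiff, Set.mem_preimage, Set.mem_compl_iff]
    tauto
  rw [hdiff]
  exact hs.measurableSet.diff (hf.isOpen_inter_preimage hs ht.isOpen_compl).measurableSet

theorem ae_eq_zero_of_hasFDerivWithinAt_of_const_on {E : Type*} [NormedAddCommGroup E]
    [NormedSpace ℝ E] [FiniteDimensional ℝ E] [MeasurableSpace E] [BorelSpace E]
    (μ : Measure E) [μ.IsAddHaarMeasure] {f : E → E} {f' : E → E →L[ℝ] E} {s : Set E}
    {c : E} (hs : MeasurableSet s) (hc : ∀ x ∈ s, f x = c)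
    (hf' : ∀ x ∈ s, HasFDerivWithinAt f (f' x) s x) : ∀ᵐ x ∂μ.restrict s, f' x = 0 := by
  have happrox : ApproximatesLinearOn f (0 : E →L[ℝ] E) s 0 := fun x hx y hy => by
    simp [hc x hx, hc y hy]
  filter_upwards [happrox.norm_fderiv_sub_le μ hs f' hf'] with x hx
  simpa using hx

theorem ContDiffOn.gradient_of_isOpen {E : Type*} [NormedAddCommGroup E]
    [InnerProductSpace ℝ E] [CompleteSpace E] {f : E → ℝ} {s : Set E} {m n : WithTop ℕ∞}
    (hf : ContDiffOn ℝ n f s) (hs : IsOpen s) (hmn : m + 1 ≤ n) :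
    ContDiffOn ℝ m (gradient f) s :=
  (InnerProductSpace.toDual ℝ E).symm.contDiff.comp_contDiffOn (hf.fderiv_of_isOpen hs hmn)

theorem lap_eq_sum_inner_of_hasFDerivAt_gradient {f : Euc d → ℝ} {x : Euc d}
    {L : Euc d →L[ℝ] Euc d} (h : HasFDerivAt (gradient f) L x) :
    lap f x = ∑ i : Fin d,
      ⟪L (EuclideanSpace.single i 1), EuclideanSpace.single i 1⟫ := by
  refine Finset.sum_congr rfl fun i _ => ?_
  have hpartial : (fun y => fderiv ℝ f y (EuclideanSpace.single i 1)) =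
      fun y => ⟪gradient f y, EuclideanSpace.single i 1⟫ := by
    funext y
    exact inner_gradient_left.symm
  rw [hpartial, (h.inner ℝ (hasFDerivAt_const (EuclideanSpace.single i (1 : ℝ)) x)).fderiv]
  simp

theorem critical_set_measure_zero_general
    (d : ℕ) (Ω : Set (Euc d)) (hop : IsOpen Ω)
    (v : Euc d → Euc d)
    (lam : ℝ) (hlam : 0 < lam)
    (φ : Euc d → ℝ) (hφ2 : ContDiffOn ℝ 2 φ Ω) (hφpos : ∀ x ∈ Ω, 0 < φ x)
    (heq : ∀ x ∈ Ω, -lap φ x + ⟪v x, gradient φ x⟫ = lam * φ x) :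
    volume {x | x ∈ Ω ∧ gradient φ x = 0} = 0 := by
  set S := {x | x ∈ Ω ∧ gradient φ x = 0}
  have hgrad : ContDiffOn ℝ 1 (gradient φ) Ω := hφ2.gradient_of_isOpen hop (by norm_num)
  have hhess : ∀ x ∈ Ω, HasFDerivAt (gradient φ) (fderiv ℝ (gradient φ) x) x := fun x hx =>
    ((hgrad.differentiableOn one_ne_zero).differentiableAt (hop.mem_nhds hx)).hasFDerivAt
  have hS : MeasurableSet S :=
    hgrad.continuousOn.measurableSet_inter_preimage_of_isClosed hop isClosed_singleton
  have hhess_zero : ∀ᵐ x ∂volume.restrict S, fderiv ℝ (gradient φ) x = 0 :=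
    ae_eq_zero_of_hasFDerivWithinAt_of_const_on volume hS (fun x hx => hx.2)
      fun x hx => (hhess x hx.1).hasFDerivWithinAt
  have hfalse : ∀ᵐ x ∂volume.restrict S, False := by
    filter_upwards [hhess_zero, ae_restrict_mem hS] with x hD2 ⟨hxΩ, hD1⟩
    have hlap : lap φ x = 0 := by
      simp [lap_eq_sum_inner_of_hasFDerivAt_gradient (hhess x hxΩ), hD2]
    have hpde := heq x hxΩ
    rw [hlap, hD1, inner_zero_right, neg_zero, zero_add] at hpde
    exact (mul_pos hlam (hφpos x hxΩ)).ne hpde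
  exact Measure.restrict_eq_zero.mp (ae_eq_bot.mp (eventually_false_iff_eq_bot.mp hfalse))

/-- The critical set of a positive solution of `-Δφ + v·∇φ = λφ` with `λ > 0` has
Lebesgue measure zero. -/
theorem critical_set_measure_zero
    (d : ℕ) (hd : 1 ≤ d) (Ω : Set (Euc d)) (hne : Ω.Nonempty) (hop : IsOpen Ω)
    (v : Euc d → Euc d) (hmeas : Measurable v) (hbd : ∃ C : ℝ, ∀ x ∈ Ω, ‖v x‖ ≤ C)
    (lam : ℝ) (hlam : 0 < lam)
    (φ : Euc d → ℝ) (hφ2 : ContDiffOn ℝ 2 φ Ω) (hφpos : ∀ x ∈ Ω, 0 < φ x)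
    (heq : ∀ x ∈ Ω, -lap φ x + ⟪v x, gradient φ x⟫ = lam * φ x) :
    volume {x | x ∈ Ω ∧ gradient φ x = 0} = 0 :=
  critical_set_measure_zero_general d Ω hop v lam hlam φ hφ2 hφpos heq
end
end
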